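/- Let θ ∈ (0, π/4), λ > 0, and t ≥ λ/((λ+1)(cos θ − sin θ) − 1), where (cos θ − sin θ) > 1/(λ+1). Let u, v, v₁, u₁ be points in ℝ² such that angle(v, u, v₁) ≤ θ, angle(u, v₁, u₁) ≤ θ, |uv₁| ≤ |uv| ≤ 1, |u₁v₁| ≤ |uv₁|, and |u₁v₁| ≥ λ. Then t·|uu₁| + |u₁v₁| + t·|v₁v| ≤ t·|uv|. -/

import Mathlib

/-!
The law of cosines gives, for an angle `α ≤ θ ≤ π/2` at `q` opposite a side `pr` with
`|rq| ≤ |pq|`, the shortcut bound `|pr| ≤ |pq| - (cos θ - sin θ) |rq|`. Applied to the two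
triangles `u v v₁` and `v₁ u u₁`, it bounds the left-hand side by
`t |uv| + t (1 - c) |uv₁| - (t c - 1) |u₁v₁|` with `c = cos θ - sin θ`, and the choice of `t`
makes the last two terms cancel in the worst case `|uv₁| = 1`, `|u₁v₁| = λ`.
-/

open Real EuclideanGeometry

section AngleBound

variable {V P : Type*} [NormedAddCommGroup V] [InnerProductSpace ℝ V] [MetricSpace P]
  [NormedAddTorsor V P]

theorem dist_le_dist_sub_mul_cos_add_mul_sin {p q r : P} (hle : dist r q ≤ dist p q) :
    dist p r ≤ dist p q - dist r q * cos (∠ p q r) + dist r q * sin (∠ p q r) := by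
  have hsin : 0 ≤ sin (∠ p q r) :=
    sin_nonneg_of_nonneg_of_le_pi (angle_nonneg _ _ _) (angle_le_pi _ _ _)
  have hbase : 0 ≤ dist p q - dist r q * cos (∠ p q r) := by
    nlinarith [cos_le_one (∠ p q r), dist_nonneg (x := r) (y := q)]
  refine le_of_sq_le_sq ?_ (by positivity)
  -- the square of the right-hand side is the law of cosines plus a nonnegative cross term
  nlinarith [law_cos p q r, sin_sq_add_cos_sq (∠ p q r), dist_comm p r,
    mul_nonneg (mul_nonneg hbase (dist_nonneg (x := r) (y := q))) hsin]

theorem dist_le_dist_sub_mul_cos_sub_sin {p q r : P} {θ : ℝ} (hθ : θ ≤ π / 2)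
    (hang : ∠ p q r ≤ θ) (hle : dist r q ≤ dist p q) :
    dist p r ≤ dist p q - (cos θ - sin θ) * dist r q := by
  have hcos : cos θ ≤ cos (∠ p q r) :=
    cos_le_cos_of_nonneg_of_le_pi (angle_nonneg _ _ _) (by linarith [pi_pos]) hang
  have hsin : sin (∠ p q r) ≤ sin θ :=
    sin_le_sin_of_le_of_le_pi_div_two (by linarith [pi_pos, angle_nonneg p q r]) hθ hang
  have hrq : 0 ≤ dist r q := dist_nonneg
  nlinarith [dist_le_dist_sub_mul_cos_add_mul_sin hle, mul_le_mul_of_nonneg_left hcos hrq,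
    mul_le_mul_of_nonneg_left hsin hrq]

end AngleBound

theorem stmt5 (θ lam t : ℝ) (hθ : θ ∈ Set.Ioo 0 (π/4)) (hlam : 0 < lam)
    (hcs : Real.cos θ - Real.sin θ > 1 / (lam + 1))
    (ht : lam / ((lam + 1) * (Real.cos θ - Real.sin θ) - 1) ≤ t)
    (u v v₁ u₁ : EuclideanSpace ℝ (Fin 2))
    (hang1 : EuclideanGeometry.angle v u v₁ ≤ θ)
    (hang2 : EuclideanGeometry.angle u v₁ u₁ ≤ θ)
    (h1 : dist u v₁ ≤ dist u v) (h2 : dist u v ≤ 1)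
    (h3 : dist u₁ v₁ ≤ dist u v₁) (h4 : lam ≤ dist u₁ v₁) :
    t * dist u u₁ + dist u₁ v₁ + t * dist v₁ v ≤ t * dist u v := by
  obtain ⟨hθ0, hθ1⟩ := hθ
  have hθ2 : θ ≤ π / 2 := by linarith [pi_pos]
  set c := cos θ - sin θ
  have hc1 : c ≤ 1 := by
    linarith [cos_le_one θ, sin_nonneg_of_nonneg_of_le_pi hθ0.le (by linarith [pi_pos])]
  have hden : 0 < (lam + 1) * c - 1 := by
    rw [gt_iff_lt, div_lt_iff₀ (by linarith)] at hcs
    linarith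
  have htlam : lam ≤ t * ((lam + 1) * c - 1) := (div_le_iff₀ hden).1 ht
  have ht0 : 0 < t := (div_pos hlam hden).trans_le ht
  have htc : 1 ≤ t * c := by nlinarith
  have hvv₁ : dist v₁ v ≤ dist u v - c * dist u v₁ := by
    simpa only [dist_comm] using
      dist_le_dist_sub_mul_cos_sub_sin hθ2 hang1 (by simpa only [dist_comm] using h1)
  have huu₁ : dist u u₁ ≤ dist u v₁ - c * dist u₁ v₁ :=
    dist_le_dist_sub_mul_cos_sub_sin hθ2 hang2 h3
  have hbalance : t * (1 - c) * dist u v₁ ≤ (t * c - 1) * dist u₁ v₁ :=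
    calc t * (1 - c) * dist u v₁ ≤ t * (1 - c) := by
          nlinarith [mul_nonneg ht0.le (sub_nonneg.2 hc1), h1.trans h2]
      _ ≤ (t * c - 1) * lam := by linarith
      _ ≤ (t * c - 1) * dist u₁ v₁ := by gcongr
  linear_combination t * hvv₁ + t * huu₁ + hbalance
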